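/- arXiv:2203.11990 — 3 statements merged into one kernel-verified Lean document; each statement's English description precedes it below -/
import Mathlib

section
/- Let g(v^x, v^y) = (v^y)^2(x̂^2 - d^2) + (v^x)^2(ŷ^2 - d^2) - 2 x̂ ŷ v^x v^y. If g(v^x, v^y) ≥ 0 and x̂^2 + ŷ^2 ≥ d^2 (initial separation), then for all t ≥ 0, (x̂ + v^x t)^2 + (ŷ + v^y t)^2 ≥ d^2. -/
/-- if `g(v^x,v^y) ≥ 0` and the aircraft are initially separated,
then they are separated for all `t ≥ 0`. -/
theorem g_nonneg_implies_separated
    (xh yh vx vy d : ℝ)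
    (hg : vy ^ 2 * (xh ^ 2 - d ^ 2) + vx ^ 2 * (yh ^ 2 - d ^ 2)
        - 2 * xh * yh * vx * vy ≥ 0)
    (hsep : xh ^ 2 + yh ^ 2 ≥ d ^ 2) :
    ∀ t : ℝ, t ≥ 0 → (xh + vx * t) ^ 2 + (yh + vy * t) ^ 2 ≥ d ^ 2 := by
  intro t ht
  rcases eq_or_lt_of_le (add_nonneg (sq_nonneg vx) (sq_nonneg vy)) with h | h
  · have hvx : vx = 0 := by nlinarith [sq_nonneg vx, sq_nonneg vy]
    have hvy : vy = 0 := by nlinarith [sq_nonneg vx, sq_nonneg vy]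
    simp [hvx, hvy]; linarith
  · nlinarith [sq_nonneg ((vx^2+vy^2)*t + (xh*vx+yh*vy)), mul_pos h h, mul_nonneg (le_of_lt h) ht]
end

section
/- Two aircraft with initial relative position (x̂, ŷ) satisfying x̂^2 + ŷ^2 ≥ d^2 and relative velocity (v^x, v^y) with (v^x,v^y) ≠ (0,0) are separated for all t ≥ 0 (i.e. (x̂ + v^x t)^2 + (ŷ + v^y t)^2 ≥ d^2 for all t ≥ 0) if and only if g(v^x,v^y) ≥ 0 or x̂ v^x + ŷ v^y ≥ 0, where g(v^x,v^y) = (v^y)^2(x̂^2 - d^2) + (v^x)^2(ŷ^2 - d^2) - 2 x̂ ŷ v^x v^y. -/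
/-- disjunctive characterization of conflict-free trajectories:
separation for all `t ≥ 0` holds iff `g ≥ 0` or the aircraft are diverging. -/
theorem separated_iff_g_or_diverging
    (xh yh vx vy d : ℝ) (hd : 0 < d)
    (hv : (vx, vy) ≠ (0, 0))
    (hsep : xh ^ 2 + yh ^ 2 > d ^ 2) :
    (∀ t : ℝ, t ≥ 0 → (xh + vx * t) ^ 2 + (yh + vy * t) ^ 2 ≥ d ^ 2) ↔
      (vy ^ 2 * (xh ^ 2 - d ^ 2) + vx ^ 2 * (yh ^ 2 - d ^ 2)
          - 2 * xh * yh * vx * vy ≥ 0)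
        ∨ xh * vx + yh * vy ≥ 0 := by
  have hv' : vx ≠ 0 ∨ vy ≠ 0 := by
    by_contra h
    push_neg at h
    exact hv (by simp [h.1, h.2])
  have hapos : 0 < vx ^ 2 + vy ^ 2 := by
    rcases hv' with h | h
    · have := pow_two_pos_of_ne_zero h
      nlinarith [sq_nonneg vy]
    · have := pow_two_pos_of_ne_zero h
      nlinarith [sq_nonneg vx]
  constructor
  · intro H
    by_contra hc
    push_neg at hc
    obtain ⟨hg, hb⟩ := hc
    set t := -(xh * vx + yh * vy) / (vx ^ 2 + vy ^ 2) with htdef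
    have ht : t ≥ 0 := div_nonneg (by linarith) hapos.le
    have key : (xh + vx * t) ^ 2 + (yh + vy * t) ^ 2 - d ^ 2 =
        (vy ^ 2 * (xh ^ 2 - d ^ 2) + vx ^ 2 * (yh ^ 2 - d ^ 2)
          - 2 * xh * yh * vx * vy) / (vx ^ 2 + vy ^ 2) := by
      rw [htdef]
      field_simp
      ring
    have hlt : (xh + vx * t) ^ 2 + (yh + vy * t) ^ 2 - d ^ 2 < 0 := by
      rw [key]
      exact div_neg_of_neg_of_pos hg hapos
    have := H t ht
    linarith
  · rintro (hg | hb) t ht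
    · nlinarith [sq_nonneg ((vx ^ 2 + vy ^ 2) * t + (xh * vx + yh * vy)), hapos,
        mul_pos hapos hapos]
    · nlinarith [mul_nonneg hb ht, mul_nonneg hapos.le (sq_nonneg t)]
end

section
/- The half-plane {(v^x,v^y) : x̂ v^x + ŷ v^y ≥ 0} (diverging trajectories) and the set {(v^x,v^y) : g(v^x,v^y) ≥ 0} together cover the complement of the open conflict region, and this complement is nonconvex whenever x̂^2 + ŷ^2 > d^2 and the conflict region has nonempty interior: specifically, there exist conflict-free points u, w in ℝ² whose midpoint lies in the open conflict region {g < 0 and x̂ v^x + ŷ v^y < 0}. -/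
/-- the conflict-free set (union of the half-plane of diverging
trajectories and `{g ≥ 0}`) covers the complement of the open conflict region
and is nonconvex whenever the open conflict region is nonempty. -/
theorem conflict_free_set_nonconvex
    (xh yh d : ℝ) (hd : 0 < d) (hsep : d ^ 2 < xh ^ 2 + yh ^ 2)
    (hne : ∃ v : ℝ × ℝ,
      v.2 ^ 2 * (xh ^ 2 - d ^ 2) + v.1 ^ 2 * (yh ^ 2 - d ^ 2)
          - 2 * xh * yh * v.1 * v.2 < 0
        ∧ xh * v.1 + yh * v.2 < 0) :
    (∀ v : ℝ × ℝ,
      ¬ (v.2 ^ 2 * (xh ^ 2 - d ^ 2) + v.1 ^ 2 * (yh ^ 2 - d ^ 2)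
            - 2 * xh * yh * v.1 * v.2 < 0
          ∧ xh * v.1 + yh * v.2 < 0) →
        (v.2 ^ 2 * (xh ^ 2 - d ^ 2) + v.1 ^ 2 * (yh ^ 2 - d ^ 2)
            - 2 * xh * yh * v.1 * v.2 ≥ 0
          ∨ xh * v.1 + yh * v.2 ≥ 0))
    ∧ ∃ u w : ℝ × ℝ,
        (u.2 ^ 2 * (xh ^ 2 - d ^ 2) + u.1 ^ 2 * (yh ^ 2 - d ^ 2)
            - 2 * xh * yh * u.1 * u.2 ≥ 0
          ∨ xh * u.1 + yh * u.2 ≥ 0)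
        ∧ (w.2 ^ 2 * (xh ^ 2 - d ^ 2) + w.1 ^ 2 * (yh ^ 2 - d ^ 2)
            - 2 * xh * yh * w.1 * w.2 ≥ 0
          ∨ xh * w.1 + yh * w.2 ≥ 0)
        ∧ (((u.2 + w.2) / 2) ^ 2 * (xh ^ 2 - d ^ 2)
            + ((u.1 + w.1) / 2) ^ 2 * (yh ^ 2 - d ^ 2)
            - 2 * xh * yh * ((u.1 + w.1) / 2) * ((u.2 + w.2) / 2) < 0
          ∧ xh * ((u.1 + w.1) / 2) + yh * ((u.2 + w.2) / 2) < 0) := by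
  constructor
  · intro v hv
    rcases not_and_or.mp hv with h | h
    · exact Or.inl (le_of_not_gt h)
    · exact Or.inr (le_of_not_gt h)
  · obtain ⟨v, hg, hin⟩ := hne
    set G : ℝ := v.2 ^ 2 * (xh ^ 2 - d ^ 2) + v.1 ^ 2 * (yh ^ 2 - d ^ 2)
        - 2 * xh * yh * v.1 * v.2 with hG
    set B : ℝ := -v.2 * xh * (xh ^ 2 - d ^ 2) + v.1 * yh * (yh ^ 2 - d ^ 2)
        - xh * yh * (-v.1 * xh + v.2 * yh) with hB
    set c : ℝ := (xh ^ 2 + yh ^ 2) * (xh ^ 2 + yh ^ 2 - d ^ 2) with hc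
    have hcpos : 0 < c := by
      have h1 : 0 < xh ^ 2 + yh ^ 2 := lt_trans (by positivity) hsep
      have h2 : 0 < xh ^ 2 + yh ^ 2 - d ^ 2 := by linarith
      positivity
    set t : ℝ := max 1 ((|G| + 2 * |B|) / c) with ht
    have ht1 : 1 ≤ t := le_max_left _ _
    have htpos : 0 < t := lt_of_lt_of_le one_pos ht1
    have ht2 : |G| + 2 * |B| ≤ t * c := by
      have := le_max_right 1 ((|G| + 2 * |B|) / c)
      calc |G| + 2 * |B| = ((|G| + 2 * |B|) / c) * c := by field_simp
        _ ≤ t * c := by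
          apply mul_le_mul_of_nonneg_right _ hcpos.le
          exact this.trans (le_refl t)
    have hGle : -G ≤ |G| := neg_le_abs G
    have hBle : B ≤ |B| := le_abs_self B
    have hBle' : -B ≤ |B| := neg_le_abs B
    have hmul : t * (|G| + 2 * |B|) ≤ t * (t * c) :=
      mul_le_mul_of_nonneg_left ht2 htpos.le
    have h1 : 0 ≤ G + 2 * t * B + t ^ 2 * c := by nlinarith
    have h2 : 0 ≤ G - 2 * t * B + t ^ 2 * c := by nlinarith
    refine ⟨(v.1 + t * yh, v.2 - t * xh), (v.1 - t * yh, v.2 + t * xh), ?_, ?_, ?_, ?_⟩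
    · left
      have hu : (v.2 - t * xh) ^ 2 * (xh ^ 2 - d ^ 2)
          + (v.1 + t * yh) ^ 2 * (yh ^ 2 - d ^ 2)
          - 2 * xh * yh * (v.1 + t * yh) * (v.2 - t * xh)
          = G + 2 * t * B + t ^ 2 * c := by rw [hG, hB, hc]; ring
      simpa [hu] using h1
    · left
      have hw : (v.2 + t * xh) ^ 2 * (xh ^ 2 - d ^ 2)
          + (v.1 - t * yh) ^ 2 * (yh ^ 2 - d ^ 2)
          - 2 * xh * yh * (v.1 - t * yh) * (v.2 + t * xh)
          = G - 2 * t * B + t ^ 2 * c := by rw [hG, hB, hc]; ring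
      simpa [hw] using h2
    · simp only
      have e1 : (v.2 - t * xh + (v.2 + t * xh)) / 2 = v.2 := by ring
      have e2 : (v.1 + t * yh + (v.1 - t * yh)) / 2 = v.1 := by ring
      rw [e1, e2]; exact hg
    · simp only
      have e1 : (v.2 - t * xh + (v.2 + t * xh)) / 2 = v.2 := by ring
      have e2 : (v.1 + t * yh + (v.1 - t * yh)) / 2 = v.1 := by ring
      rw [e1, e2]; exact hin
end
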